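/- In the [22]-representation of B₄ as above, R₃R₂R₁²R₂R₃ = I₂ (the Jucys–Murphy twist Ẽ₄ = σ₃σ₂σ₁²σ₂σ₃ acts trivially). -/

import Mathlib

/-!
Since `R₃ = R₁`, the word regroups as `(R₁R₂R₁)²`. Conjugating `R₂` by the diagonal matrix `R₁`
cancels the powers of `q`, leaving the reflection `!![-c, s; s, c]`, whose square is
`(c² + s²) • 1 = 1`.
-/

open Matrix

theorem Matrix.diagonal_two_mul_mul_diagonal_two {R : Type*} [CommRing R] (x y a b c d : R) :
    !![x, 0; 0, y] * !![a, b; c, d] * !![x, 0; 0, y] =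
      !![x ^ 2 * a, x * y * b; x * y * c, y ^ 2 * d] := by
  simp only [mul_fin_two]
  ext i j
  fin_cases i <;> fin_cases j <;> simp <;> ring

theorem Matrix.reflection_mul_self {R : Type*} [CommRing R] {c s : R} (h : c ^ 2 + s ^ 2 = 1) :
    !![-c, s; s, c] * !![-c, s; s, c] = 1 := by
  rw [mul_fin_two, one_fin_two, ← h]
  ext i j
  fin_cases i <;> fin_cases j <;> simp <;> ring

theorem mul_mul_sq_mul_mul_eq_sq {M : Type*} [Monoid M] (a b : M) :
    a * b * a ^ 2 * b * a = (a * b * a) ^ 2 := by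
  simp only [sq, mul_assoc]

theorem inv_add_inv_sq_add_sq_eq_one {K : Type*} [Field K] {q : K} (hq : q ≠ 0)
    (hq2 : q + q⁻¹ ≠ 0) :
    ((q + q⁻¹)⁻¹) ^ 2 + (q ^ 2 + 1 + (q⁻¹) ^ 2) / (q + q⁻¹) ^ 2 = 1 := by
  have hsq : (q + q⁻¹) ^ 2 = q ^ 2 + 2 + (q⁻¹) ^ 2 := by field_simp; ring
  rw [inv_pow, ← one_div, ← add_div, div_eq_one_iff_eq (pow_ne_zero 2 hq2), hsq]
  ring

/-- In the `[22]` representation of `B₄`, the Jucys–Murphy twist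
`Ẽ₄ = σ₃σ₂σ₁²σ₂σ₃` acts trivially: `R₃R₂R₁²R₂R₃ = I₂`. -/
theorem jucys_murphy_E4_22 {K : Type*} [Field K] (q s : K)
    (hq : q ≠ 0) (hq2 : q + q⁻¹ ≠ 0)
    (hs : s ^ 2 = (q ^ 2 + 1 + (q⁻¹) ^ 2) / (q + q⁻¹) ^ 2)
    (c : K) (hc : c = (q + q⁻¹)⁻¹)
    (R₁ R₂ R₃ : Matrix (Fin 2) (Fin 2) K)
    (hR₁ : R₁ = !![q, 0; 0, -q⁻¹])
    (hR₂ : R₂ = !![-c * (q⁻¹) ^ 2, -s; -s, q ^ 2 * c])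
    (hR₃ : R₃ = R₁) :
    R₃ * R₂ * R₁ ^ 2 * R₂ * R₃ = 1 := by
  have hcs : c ^ 2 + s ^ 2 = 1 := by
    rw [hc, hs]
    exact inv_add_inv_sq_add_sq_eq_one hq hq2
  have hconj : R₁ * R₂ * R₁ = !![-c, s; s, c] := by
    rw [hR₁, hR₂, diagonal_two_mul_mul_diagonal_two]
    congr 1
    field_simp
  rw [hR₃, mul_mul_sq_mul_mul_eq_sq, hconj, sq, reflection_mul_self hcs]
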